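/- arXiv:2605.17114 — 2 statements merged into one kernel-verified Lean document; each statement's English description precedes it below -/
import Mathlib

section
/- Let 2 < q < ∞ and define C_q = (2π)^{1/2} ((q−1)/(q−2))^{1/2} [ (q/(q−1))^{(q−2)/(2(q−1))} + (q/(q−1))^{−q/(2(q−1))} ]. Then for every f ∈ L¹(ℝ²) ∩ L^q(ℝ²) and every x ∈ ℝ², (1/(2π)) ∫_{ℝ²} |f(y)|/|x−y| dy ≤ C_q ‖f‖_{L¹}^{(q−2)/(2(q−1))} ‖f‖_{L^q}^{q/(2(q−1))}. In particular, ‖∇((1/(2π)) ln(1/|·|) * f)‖_{L^∞} ≤ C_q ‖f‖_{L¹}^{(q−2)/(2(q−1))} ‖f‖_{L^q}^{q/(2(q−1))}. -/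
/-!
Split the integral at a radius `R` around `x`, and let `p = q/(q-1) < 2` be the conjugate
exponent. On `B_R(x)`, Hölder's inequality gives `‖f‖_q ‖|·|⁻¹‖_{L^p(B_R)}`, and in polar
coordinates `∫_{B_R} |z|^{-p} dz = 2π R^{2-p}/(2-p)`; off the ball the kernel is at most `1/R`,
which gives `‖f‖_1 / R`. For `R = (p‖f‖_1/‖f‖_q)^{p/2} (2π/(2-p))^{-1/2}` the two terms are
exactly the two summands of `C_q ‖f‖_1^{1-p/2} ‖f‖_q^{p/2}` (this `R` is not the minimiser; it is
the choice that produces `C_q`), and the prefactor `1/(2π) ≤ 1` is discarded.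
-/

open MeasureTheory
open scoped ENNReal
open Metric Set Module

theorem exists_pos_mul_rpow_add_div_eq {p K A M : ℝ} (hp : 0 < p) (hK : 0 < K) (hA : 0 < A)
    (hM : 0 < M) :
    ∃ R > 0, A * (K * R ^ (2 - p)) ^ (1 / p) + M / R =
      K ^ (1 / 2 : ℝ) * (p ^ (1 - p / 2) + p ^ (-(p / 2))) * M ^ (1 - p / 2) * A ^ (p / 2) := by
  set R := (p * M / A) ^ (p / 2) * K ^ (-(1 / 2 : ℝ))
  have hR : 0 < R := by positivity
  have hnear : A * (K * R ^ (2 - p)) ^ (1 / p) =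
      K ^ (1 / 2 : ℝ) * p ^ (1 - p / 2) * M ^ (1 - p / 2) * A ^ (p / 2) := by
    apply Real.log_injOn_pos (mem_Ioi.2 (by positivity)) (mem_Ioi.2 (by positivity))
    simp (disch := positivity) only [Real.log_mul, Real.log_div, Real.log_rpow, R]
    field_simp
    ring
  have hfar : M / R = K ^ (1 / 2 : ℝ) * p ^ (-(p / 2)) * M ^ (1 - p / 2) * A ^ (p / 2) := by
    apply Real.log_injOn_pos (mem_Ioi.2 (by positivity)) (mem_Ioi.2 (by positivity))
    simp (disch := positivity) only [Real.log_mul, Real.log_div, Real.log_rpow, R]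
    field_simp
    ring
  refine ⟨R, hR, ?_⟩
  rw [hnear, hfar]
  ring

theorem lintegral_compl_ball_abs_div_norm_sub_le {E : Type*} [SeminormedAddCommGroup E]
    [MeasurableSpace E] [OpensMeasurableSpace E] (μ : Measure E) (f : E → ℝ) (x : E) {R : ℝ}
    (hR : 0 < R) :
    ∫⁻ y in (ball x R)ᶜ, ENNReal.ofReal (|f y| / ‖x - y‖) ∂μ ≤
      eLpNorm f 1 μ * ENNReal.ofReal R⁻¹ := by
  have hfar : ∀ y ∈ (ball x R)ᶜ,
      ENNReal.ofReal (|f y| / ‖x - y‖) ≤ ‖f y‖ₑ * ENNReal.ofReal R⁻¹ := by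
    intro y hy
    have hRy : R ≤ ‖x - y‖ := by simpa [dist_eq_norm, norm_sub_rev] using hy
    rw [Real.enorm_eq_ofReal_abs, ← ENNReal.ofReal_mul (abs_nonneg _), ← div_eq_mul_inv]
    gcongr
  calc ∫⁻ y in (ball x R)ᶜ, ENNReal.ofReal (|f y| / ‖x - y‖) ∂μ
      ≤ ∫⁻ y in (ball x R)ᶜ, ‖f y‖ₑ * ENNReal.ofReal R⁻¹ ∂μ :=
        setLIntegral_mono' measurableSet_ball.compl hfar
    _ = (∫⁻ y in (ball x R)ᶜ, ‖f y‖ₑ ∂μ) * ENNReal.ofReal R⁻¹ :=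
        lintegral_mul_const' _ _ ENNReal.ofReal_ne_top
    _ ≤ eLpNorm f 1 μ * ENNReal.ofReal R⁻¹ := by
        rw [eLpNorm_one_eq_lintegral_enorm]
        gcongr
        exact Measure.restrict_le_self

section AddHaar

variable {E : Type*} [NormedAddCommGroup E] [NormedSpace ℝ E] [FiniteDimensional ℝ E]
  [MeasurableSpace E] [BorelSpace E] (μ : Measure E) [μ.IsAddHaarMeasure]

theorem lintegral_ball_norm_rpow_neg [Nontrivial E] {p R : ℝ} (hp : p < finrank ℝ E)
    (hR : 0 ≤ R) :
    ∫⁻ z in ball (0 : E) R, ENNReal.ofReal (‖z‖ ^ (-p)) ∂μ =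
      ENNReal.ofReal
        (finrank ℝ E * μ.real (ball 0 1) / (finrank ℝ E - p) * R ^ (finrank ℝ E - p)) := by
  set n := finrank ℝ E
  set g : ℝ → ℝ := (Iio R).indicator fun r ↦ r ^ (-p)
  have hn : 1 ≤ n := finrank_pos
  have hball : (ball (0 : E) R).indicator (fun z ↦ ‖z‖ ^ (-p)) = fun z ↦ g ‖z‖ := by
    ext z; simp [g, indicator]
  have hradial : EqOn (fun y : ℝ ↦ y ^ (n - 1) • g y)
      ((Ioo 0 R).indicator fun y ↦ y ^ ((n : ℝ) - 1 - p)) (Ioi 0) := by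
    intro y (hy : 0 < y)
    by_cases hyR : y < R
    · simp only [g, indicator, mem_Iio, mem_Ioo, hyR, hy, true_and, if_true, smul_eq_mul]
      rw [← Real.rpow_natCast, Nat.cast_sub hn, ← Real.rpow_add hy]
      ring_nf
    · simp [g, hyR]
  have hint : IntegrableOn (fun y : ℝ ↦ y ^ ((n : ℝ) - 1 - p)) (Ioo 0 R) :=
    (intervalIntegrable_iff_integrableOn_Ioo_of_le hR).1
      (intervalIntegral.intervalIntegrable_rpow' (by linarith))
  have hg_int : Integrable (fun z : E ↦ g ‖z‖) μ := by
    rw [integrable_fun_norm_addHaar, integrableOn_congr_fun hradial measurableSet_Ioi]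
    exact (hint.integrable_indicator measurableSet_Ioo).integrableOn
  have hradial_int : ∫ y in Ioi (0 : ℝ), y ^ (n - 1) • g y = R ^ ((n : ℝ) - p) / (n - p) := by
    rw [setIntegral_congr_fun measurableSet_Ioi hradial, setIntegral_indicator measurableSet_Ioo,
      Ioi_inter_Ioo, max_self, ← integral_Ioc_eq_integral_Ioo,
      ← intervalIntegral.integral_of_le hR, integral_rpow (Or.inl (by linarith)),
      Real.zero_rpow (by linarith)]
    ring_nf
  have hball_int : IntegrableOn (fun z : E ↦ ‖z‖ ^ (-p)) (ball 0 R) μ := by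
    rwa [← integrable_indicator_iff measurableSet_ball, hball]
  rw [← ofReal_integral_eq_lintegral_ofReal hball_int
      (.of_forall fun z ↦ Real.rpow_nonneg (norm_nonneg z) _),
    ← integral_indicator measurableSet_ball, hball, integral_fun_norm_addHaar, hradial_int,
    nsmul_eq_mul, smul_eq_mul]
  congr 1
  ring

theorem lintegral_ball_abs_div_norm_sub_le {p q : ℝ} (hpq : q.HolderConjugate p) {f : E → ℝ}
    (hf : AEMeasurable f μ) (x : E) (R : ℝ) :
    ∫⁻ y in ball x R, ENNReal.ofReal (|f y| / ‖x - y‖) ∂μ ≤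
      eLpNorm f (ENNReal.ofReal q) μ *
        (∫⁻ z in ball 0 R, ENNReal.ofReal (‖z‖ ^ (-p)) ∂μ) ^ (1 / p) := by
  have hsplit : ∀ y, ENNReal.ofReal (|f y| / ‖x - y‖) =
      ‖f y‖ₑ * ENNReal.ofReal ‖x - y‖⁻¹ := fun y ↦ by
    rw [div_eq_mul_inv, ENNReal.ofReal_mul (abs_nonneg _), Real.enorm_eq_ofReal_abs]
  have hkernel : ∀ y, ENNReal.ofReal ‖x - y‖⁻¹ ^ p = ENNReal.ofReal (‖x - y‖ ^ (-p)) := fun y ↦ by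
    rw [ENNReal.ofReal_rpow_of_nonneg (by positivity) hpq.symm.nonneg,
      Real.inv_rpow (norm_nonneg _), Real.rpow_neg (norm_nonneg _)]
  have htranslate : ∫⁻ y in ball x R, ENNReal.ofReal (‖x - y‖ ^ (-p)) ∂μ =
      ∫⁻ z in ball 0 R, ENNReal.ofReal (‖z‖ ^ (-p)) ∂μ := by
    have hpre : (fun y ↦ x - y) ⁻¹' ball 0 R = ball x R := by
      ext y; simp [dist_eq_norm, norm_sub_rev]
    rw [← hpre]
    exact (Measure.measurePreserving_sub_left μ x).setLIntegral_comp_preimage_emb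
      (MeasurableEquiv.subLeft x).measurableEmbedding (fun z ↦ ENNReal.ofReal (‖z‖ ^ (-p))) _
  have hLq : (∫⁻ y in ball x R, ‖f y‖ₑ ^ q ∂μ) ^ (1 / q) ≤ eLpNorm f (ENNReal.ofReal q) μ := by
    have hq0 : ENNReal.ofReal q ≠ 0 := by simpa using hpq.pos
    refine le_of_eq_of_le ?_ (eLpNorm_restrict_le f _ μ (ball x R))
    rw [eLpNorm_eq_lintegral_rpow_enorm_toReal hq0 ENNReal.ofReal_ne_top,
      ENNReal.toReal_ofReal hpq.nonneg]
  simp_rw [hsplit]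
  calc ∫⁻ y in ball x R, ‖f y‖ₑ * ENNReal.ofReal ‖x - y‖⁻¹ ∂μ
      ≤ (∫⁻ y in ball x R, ‖f y‖ₑ ^ q ∂μ) ^ (1 / q) *
          (∫⁻ y in ball x R, ENNReal.ofReal ‖x - y‖⁻¹ ^ p ∂μ) ^ (1 / p) :=
        ENNReal.lintegral_mul_le_Lp_mul_Lq _ hpq hf.enorm.restrict (by fun_prop)
    _ ≤ _ := by
        simp_rw [hkernel, htranslate]
        gcongr

theorem lintegral_abs_div_norm_sub_le [Nontrivial E] {p q R : ℝ} (hpq : q.HolderConjugate p)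
    (hpn : p < finrank ℝ E) (hR : 0 < R) {f : E → ℝ} (hf1 : Integrable f μ)
    (hfq : MemLp f (ENNReal.ofReal q) μ) (x : E) :
    ∫⁻ y, ENNReal.ofReal (|f y| / ‖x - y‖) ∂μ ≤
      ENNReal.ofReal ((eLpNorm f (ENNReal.ofReal q) μ).toReal *
          (finrank ℝ E * μ.real (ball 0 1) / (finrank ℝ E - p) * R ^ (finrank ℝ E - p)) ^ (1 / p) +
        (∫ y, |f y| ∂μ) / R) := by
  have hL1 : eLpNorm f 1 μ = ENNReal.ofReal (∫ y, |f y| ∂μ) := by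
    simp_rw [eLpNorm_one_eq_lintegral_enorm, ← ofReal_integral_norm_eq_lintegral_enorm hf1,
      Real.norm_eq_abs]
  have hM : 0 ≤ ∫ y, |f y| ∂μ := integral_nonneg fun _ ↦ abs_nonneg _
  have hK : 0 ≤ finrank ℝ E * μ.real (ball 0 1) / (finrank ℝ E - p) * R ^ (finrank ℝ E - p) := by
    have : 0 < finrank ℝ E - p := by linarith
    positivity
  rw [← lintegral_add_compl _ (measurableSet_ball (x := x) (ε := R)), div_eq_mul_inv _ R,
    ENNReal.ofReal_add (mul_nonneg ENNReal.toReal_nonneg (Real.rpow_nonneg hK _))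
      (mul_nonneg hM (inv_nonneg.2 hR.le)),
    ENNReal.ofReal_mul ENNReal.toReal_nonneg, ENNReal.ofReal_toReal hfq.eLpNorm_ne_top,
    ENNReal.ofReal_mul hM, ← hL1, ← ENNReal.ofReal_rpow_of_nonneg hK hpq.symm.one_div_nonneg,
    ← lintegral_ball_norm_rpow_neg μ hpn hR.le]
  exact add_le_add (lintegral_ball_abs_div_norm_sub_le μ hpq hf1.aemeasurable x R)
    (lintegral_compl_ball_abs_div_norm_sub_le μ f x hR)

end AddHaar

theorem volume_real_ball_fin_two (x : EuclideanSpace ℝ (Fin 2)) {r : ℝ} (hr : 0 ≤ r) :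
    volume.real (ball x r) = r ^ 2 * Real.pi := by
  simp [Measure.real, hr, Real.pi_pos.le]

theorem integral_abs_div_norm_sub_le_fin_two {p q : ℝ} (hpq : q.HolderConjugate p) (hp2 : p < 2)
    {f : EuclideanSpace ℝ (Fin 2) → ℝ} (hf1 : Integrable f volume)
    (hfq : MemLp f (ENNReal.ofReal q) volume) (x : EuclideanSpace ℝ (Fin 2)) :
    ∫ y, |f y| / ‖x - y‖ ≤
      (2 * Real.pi / (2 - p)) ^ ((1 : ℝ) / 2) * (p ^ (1 - p / 2) + p ^ (-(p / 2))) *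
        (∫ y, |f y|) ^ (1 - p / 2) * (eLpNorm f (ENNReal.ofReal q) volume).toReal ^ (p / 2) := by
  have hp0 : 0 < p := hpq.symm.pos
  have hK : 0 < 2 * Real.pi / (2 - p) := div_pos Real.two_pi_pos (by linarith)
  by_cases hf0 : f =ᵐ[volume] 0
  · have hM : ∫ y, |f y| = 0 := integral_eq_zero_of_ae (hf0.mono fun y hy ↦ by simp [hy])
    have hLHS : ∫ y, |f y| / ‖x - y‖ = 0 :=
      integral_eq_zero_of_ae (hf0.mono fun y hy ↦ by simp [hy])
    rw [hM, hLHS, Real.zero_rpow (by linarith)]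
    simp
  have hM : 0 < ∫ y, |f y| := by
    refine (integral_nonneg fun _ ↦ abs_nonneg _).lt_of_ne fun h ↦ hf0 ?_
    filter_upwards [(integral_eq_zero_iff_of_nonneg (fun _ ↦ abs_nonneg _) hf1.abs).1 h.symm]
      with y hy using abs_eq_zero.1 hy
  have hA : 0 < (eLpNorm f (ENNReal.ofReal q) volume).toReal :=
    ENNReal.toReal_pos (fun h ↦ hf0 ((eLpNorm_eq_zero_iff hfq.1 (by simpa using hpq.pos)).1 h))
      hfq.eLpNorm_ne_top
  obtain ⟨R, hR, hnear_far⟩ := exists_pos_mul_rpow_add_div_eq hp0 hK hA hM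
  have hbound := lintegral_abs_div_norm_sub_le volume hpq (by simpa using hp2) hR hf1 hfq x
  rw [finrank_euclideanSpace_fin, volume_real_ball_fin_two _ zero_le_one, one_pow, one_mul,
    Nat.cast_ofNat, hnear_far] at hbound
  have hlintegral : ∫ y, |f y| / ‖x - y‖ ≤ (∫⁻ y, ENNReal.ofReal (|f y| / ‖x - y‖)).toReal :=
    (le_abs_self _).trans <| by
      simpa [abs_div] using norm_integral_le_lintegral_norm fun y ↦ |f y| / ‖x - y‖
  exact hlintegral.trans (ENNReal.toReal_le_of_le_ofReal (by positivity) hbound)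

/-- Pointwise bound for the Riesz potential (gradient of the Newtonian potential):
for `2 < q < ∞` and `f ∈ L¹(ℝ²) ∩ L^q(ℝ²)`,
`(1/(2π)) ∫ |f(y)|/|x−y| dy ≤ C_q ‖f‖_{L¹}^{(q−2)/(2(q−1))} ‖f‖_{L^q}^{q/(2(q−1))}`
with the explicit constant
`C_q = (2π)^{1/2} ((q−1)/(q−2))^{1/2} [(q/(q−1))^{(q−2)/(2(q−1))} + (q/(q−1))^{−q/(2(q−1))}]`. -/
theorem riesz_potential_pointwise_bound (q : ℝ) (hq : 2 < q)
    (f : EuclideanSpace ℝ (Fin 2) → ℝ)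
    (hf1 : Integrable f volume)
    (hfq : MemLp f (ENNReal.ofReal q) volume) (x : EuclideanSpace ℝ (Fin 2)) :
    (1 / (2 * Real.pi)) * ∫ y, |f y| / ‖x - y‖ ≤
      ((2 * Real.pi) ^ ((1 : ℝ) / 2) * ((q - 1) / (q - 2)) ^ ((1 : ℝ) / 2) *
          ((q / (q - 1)) ^ ((q - 2) / (2 * (q - 1))) +
            (q / (q - 1)) ^ (-(q / (2 * (q - 1)))))) *
        (∫ y, |f y|) ^ ((q - 2) / (2 * (q - 1))) *
        ((eLpNorm f (ENNReal.ofReal q) volume).toReal) ^ (q / (2 * (q - 1))) := by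
  have hq1 : 0 < q - 1 := by linarith
  set p := q / (q - 1) with hp
  have hpq : q.HolderConjugate p := .conjExponent (by linarith)
  have hp2 : p < 2 := by rw [hp, div_lt_iff₀ hq1]; linarith
  have hconst : (2 * Real.pi) ^ ((1 : ℝ) / 2) * ((q - 1) / (q - 2)) ^ ((1 : ℝ) / 2) =
      (2 * Real.pi / (2 - p)) ^ ((1 : ℝ) / 2) := by
    rw [← Real.mul_rpow Real.two_pi_pos.le (div_pos hq1 (by linarith)).le, hp]
    congr 1
    field_simp
    ring
  have hα : (q - 2) / (2 * (q - 1)) = 1 - p / 2 := by rw [hp]; field_simp; ring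
  have hβ : q / (2 * (q - 1)) = p / 2 := by rw [hp]; field_simp
  rw [hconst, hα, hβ]
  have h2π : 1 / (2 * Real.pi) ≤ 1 := by
    rw [div_le_one Real.two_pi_pos]; linarith [Real.pi_gt_three]
  exact (mul_le_of_le_one_left (integral_nonneg fun _ ↦ by positivity) h2π).trans
    (integral_abs_div_norm_sub_le_fin_two hpq hp2 hf1 hfq x)
end

section
/- Let g : ℝ² → [0,∞) be measurable with ∫_{ℝ²} g(x)(1 + ln(1+|x|²)) dx < ∞. Then the function x ↦ g(x) ln⁻ g(x) is integrable on ℝ², and ∫_{ℝ²} g(x) ln⁻ g(x) dx ≤ 2 ∫_{ℝ²} g(x) ln(1+|x|²) dx + (ln π) ∫_{ℝ²} g(x) dx + 1/e. -/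
open MeasureTheory Real Set Filter Topology

/-!
Compare `g` with the probability density `m(x) = (π (1 + |x|²)²)⁻¹` on `ℝ²`. Writing
`-log g = log (m / g) - log m` and using `t log t ≥ -1/e` in the form `g log (m / g) ≤ m / e`
gives the pointwise bound `g ln⁻ g ≤ m / e + g (log π + 2 log (1 + |x|²))`; integrate it.
-/

lemma integral_Ioi_mul_inv_one_add_sq_sq :
    ∫ y in Ioi (0 : ℝ), y * ((1 + y ^ 2) ^ 2)⁻¹ = 1 / 2 := by
  have hderiv : ∀ y ∈ Ici (0 : ℝ),
      HasDerivAt (fun y : ℝ => -(2 * (1 + y ^ 2))⁻¹) (y * ((1 + y ^ 2) ^ 2)⁻¹) y := by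
    intro y _
    have h := ((((hasDerivAt_pow 2 y).const_add 1).const_mul (2 : ℝ)).inv
      (by positivity)).neg
    refine h.congr_deriv ?_
    field_simp
    ring
  have hlim : Tendsto (fun y : ℝ => -(2 * (1 + y ^ 2))⁻¹) atTop (𝓝 0) := by
    have h : Tendsto (fun y : ℝ => 2 * (1 + y ^ 2)) atTop atTop :=
      (tendsto_atTop_add_const_left _ 1 (tendsto_pow_atTop two_ne_zero)).const_mul_atTop
        two_pos
    simpa using (tendsto_inv_atTop_zero.comp h).neg
  rw [integral_Ioi_of_hasDerivAt_of_nonneg' hderiv (fun y hy => by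
    have : (0 : ℝ) < y := hy; positivity) hlim]
  norm_num

/-- The density of the normalized area measure of the unit sphere, transported to `ℝ²` by
stereographic projection. -/
noncomputable def stereographicDensity (x : EuclideanSpace ℝ (Fin 2)) : ℝ :=
  (π * (1 + ‖x‖ ^ 2) ^ 2)⁻¹

section

variable (x : EuclideanSpace ℝ (Fin 2))

lemma stereographicDensity_pos : 0 < stereographicDensity x := by
  unfold stereographicDensity; positivity

lemma stereographicDensity_le_one : stereographicDensity x ≤ 1 := by
  have h : 1 ≤ (1 + ‖x‖ ^ 2) ^ 2 := one_le_pow₀ (le_add_of_nonneg_right (sq_nonneg _))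
  exact inv_le_one_of_one_le₀ (by nlinarith [pi_gt_three])

lemma neg_log_stereographicDensity :
    -log (stereographicDensity x) = log π + 2 * log (1 + ‖x‖ ^ 2) := by
  rw [stereographicDensity, log_inv, neg_neg, log_mul pi_ne_zero (by positivity), log_pow]
  norm_num

end

lemma integrable_stereographicDensity : Integrable stereographicDensity := by
  have h := integrable_rpow_neg_one_add_norm_sq
    (μ := (volume : Measure (EuclideanSpace ℝ (Fin 2)))) (r := 4) (by norm_num)
  refine (h.const_mul π⁻¹).congr (Eventually.of_forall fun x => ?_)
  simp only [stereographicDensity]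
  rw [show -(4 : ℝ) / 2 = -(2 : ℕ) by norm_num, rpow_neg (by positivity), rpow_natCast, mul_inv]

lemma integral_stereographicDensity : ∫ x, stereographicDensity x = 1 := by
  have h := integral_fun_norm_addHaar (volume : Measure (EuclideanSpace ℝ (Fin 2)))
    (fun r => (π * (1 + r ^ 2) ^ 2)⁻¹)
  have hradial : ∫ y in Ioi (0 : ℝ), y ^ (2 - 1) • (π * (1 + y ^ 2) ^ 2)⁻¹
      = π⁻¹ * ∫ y in Ioi (0 : ℝ), y * ((1 + y ^ 2) ^ 2)⁻¹ := by
    rw [← integral_const_mul]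
    congr 1 with y
    rw [smul_eq_mul, mul_inv]
    ring
  simp only [finrank_euclideanSpace, Fintype.card_fin] at h
  unfold stereographicDensity
  rw [h, hradial, integral_Ioi_mul_inv_one_add_sq_sq, measureReal_def,
    EuclideanSpace.volume_ball_fin_two]
  simp [pi_nonneg]

lemma mul_log_div_le {a b : ℝ} (ha : 0 < a) (hb : 0 < b) : a * log (b / a) ≤ b / exp 1 := by
  have h := log_le_sub_one_of_pos (show 0 < b / a / exp 1 by positivity)
  rw [log_div (by positivity) (exp_pos 1).ne', log_exp] at h
  calc a * log (b / a) ≤ a * (b / a / exp 1) := by gcongr; linarith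
    _ = b / exp 1 := by field_simp

lemma mul_max_neg_log_le {a b : ℝ} (ha : 0 ≤ a) (hb : 0 < b) (hb1 : b ≤ 1) :
    a * max (-log a) 0 ≤ b / exp 1 + a * -log b := by
  have hlogb : 0 ≤ a * -log b := mul_nonneg ha (neg_nonneg.mpr (log_nonpos hb.le hb1))
  rcases ha.eq_or_lt with rfl | ha
  · simp only [zero_mul]; positivity
  rcases le_total (-log a) 0 with h | h
  · rw [max_eq_right h, mul_zero]; positivity
  · have : -log a = log (b / a) + -log b := by rw [log_div hb.ne' ha.ne']; ring
    rw [max_eq_left h, this, mul_add]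
    linarith [mul_log_div_le ha hb]

lemma mul_max_neg_log_le_stereographicDensity {t : ℝ} (ht : 0 ≤ t)
    (x : EuclideanSpace ℝ (Fin 2)) :
    t * max (-log t) 0 ≤
      stereographicDensity x / exp 1 + (log π * t + 2 * (t * log (1 + ‖x‖ ^ 2))) := by
  have h := mul_max_neg_log_le ht (stereographicDensity_pos x) (stereographicDensity_le_one x)
  rw [neg_log_stereographicDensity] at h
  linarith

lemma integrable_and_integrable_mul_log_of_integrable_mul_one_add_log {E : Type*}
    [NormedAddCommGroup E] [MeasurableSpace E] [OpensMeasurableSpace E] {μ : Measure E}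
    {g : E → ℝ} (hmeas : Measurable g) (hnonneg : ∀ x, 0 ≤ g x)
    (hint : Integrable (fun x => g x * (1 + log (1 + ‖x‖ ^ 2))) μ) :
    Integrable g μ ∧ Integrable (fun x => g x * log (1 + ‖x‖ ^ 2)) μ := by
  have hlog : ∀ x : E, 0 ≤ log (1 + ‖x‖ ^ 2) := fun x =>
    log_nonneg (le_add_of_nonneg_right (sq_nonneg _))
  refine ⟨hint.mono' hmeas.aestronglyMeasurable <| .of_forall fun x => ?_,
    hint.mono' (by fun_prop) <| .of_forall fun x => ?_⟩
  · rw [norm_of_nonneg (hnonneg x)]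
    nlinarith [hnonneg x, hlog x]
  · rw [norm_of_nonneg (mul_nonneg (hnonneg x) (hlog x))]
    nlinarith [hnonneg x]

/-- Control of the negative part of the entropy: if `g ≥ 0` on `ℝ²` satisfies
`∫ g (1 + ln(1+|x|²)) < ∞`, then `g ln⁻ g` is integrable and
`∫ g ln⁻ g ≤ 2 ∫ g ln(1+|x|²) + ln π ∫ g + 1/e`, where `ln⁻ s = max(−ln s, 0)`. -/
theorem entropy_negative_part_control (g : EuclideanSpace ℝ (Fin 2) → ℝ)
    (hmeas : Measurable g) (hnonneg : ∀ x, 0 ≤ g x)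
    (hint : Integrable (fun x => g x * (1 + Real.log (1 + ‖x‖ ^ 2))) volume) :
    Integrable (fun x => g x * max (-Real.log (g x)) 0) volume ∧
    (∫ x, g x * max (-Real.log (g x)) 0) ≤
      2 * (∫ x, g x * Real.log (1 + ‖x‖ ^ 2)) + Real.log Real.pi * (∫ x, g x) +
        1 / Real.exp 1 := by
  obtain ⟨hg, hgL⟩ :=
    integrable_and_integrable_mul_log_of_integrable_mul_one_add_log hmeas hnonneg hint
  have hbound := fun x => mul_max_neg_log_le_stereographicDensity (hnonneg x) x
  have hrest : Integrable (fun x => log π * g x + 2 * (g x * log (1 + ‖x‖ ^ 2))) :=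
    (hg.const_mul _).add (hgL.const_mul _)
  have hmajor : Integrable (fun x => stereographicDensity x / exp 1 +
      (log π * g x + 2 * (g x * log (1 + ‖x‖ ^ 2)))) :=
    (integrable_stereographicDensity.div_const _).add hrest
  have hF : Integrable (fun x => g x * max (-log (g x)) 0) :=
    hmajor.mono' (by fun_prop) <| .of_forall fun x => by
      rw [norm_of_nonneg (mul_nonneg (hnonneg x) (le_max_right _ _))]
      exact hbound x
  refine ⟨hF, (integral_mono hF hmajor hbound).trans_eq ?_⟩
  rw [integral_add (integrable_stereographicDensity.div_const _) hrest,
    integral_add (hg.const_mul _) (hgL.const_mul _), integral_div, integral_const_mul,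
    integral_const_mul, integral_stereographicDensity]
  ring
end
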